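/- arXiv:0803.2322 — 2 statements merged into one kernel-verified Lean document; each statement's English description precedes it below -/
import Mathlib

section
/- Suppose V : (0,∞) → R is differentiable with V'(s) ≤ 0 for all s > 0. Then for any pairwise distinct a, b, c ∈ R^3, the quantity U(a,b,c) := w(c,a) ((c-a)/|c-a|)·((b-a)/|b-a|) + w(a,c) ((a-c)/|a-c|)·((b-c)/|b-c|) is nonnegative, where w(x,y) := -2 V'(|x - y|). -/
open RealInnerProductSpace

lemma key_ineq {E : Type*} [NormedAddCommGroup E] [InnerProductSpace ℝ E]
    (x y : E) (hx : x ≠ 0) (hy : y ≠ 0) :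
    0 ≤ ⟪x - y, ‖x‖⁻¹ • x - ‖y‖⁻¹ • y⟫ := by
  have hxn : (0:ℝ) < ‖x‖ := norm_pos_iff.mpr hx
  have hyn : (0:ℝ) < ‖y‖ := norm_pos_iff.mpr hy
  have hcs : ⟪x, y⟫ ≤ ‖x‖ * ‖y‖ := real_inner_le_norm x y
  have hexp : ⟪x - y, ‖x‖⁻¹ • x - ‖y‖⁻¹ • y⟫
      = ‖x‖ + ‖y‖ - (‖x‖⁻¹ + ‖y‖⁻¹) * ⟪x, y⟫ := by
    rw [inner_sub_left, inner_sub_right, inner_sub_right,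
      real_inner_smul_right, real_inner_smul_right, real_inner_smul_right,
      real_inner_smul_right, real_inner_self_eq_norm_sq, real_inner_self_eq_norm_sq,
      real_inner_comm y x]
    field_simp
    ring
  rw [hexp]
  have h1 : (‖x‖⁻¹ + ‖y‖⁻¹) * ⟪x, y⟫ ≤ (‖x‖⁻¹ + ‖y‖⁻¹) * (‖x‖ * ‖y‖) := by
    apply mul_le_mul_of_nonneg_left hcs
    positivity
  have h2 : (‖x‖⁻¹ + ‖y‖⁻¹) * (‖x‖ * ‖y‖) = ‖x‖ + ‖y‖ := by
    field_simp; ring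
  linarith

/-- If `V : (0,∞) → ℝ` is differentiable with derivative `V' ≤ 0` (repulsive pair
potential), then for pairwise distinct `a, b, c ∈ ℝ³` the triple-interaction quantity
`U(a,b,c) = w(c,a) cos α_a + w(a,c) cos α_c` with weights `w(x,y) = -2 V'(|x-y|)`
is nonnegative. -/
theorem triple_interaction_nonneg (V V' : ℝ → ℝ)
    (hdiff : ∀ s > (0 : ℝ), HasDerivAt V (V' s) s)
    (hV' : ∀ s > (0 : ℝ), V' s ≤ 0)
    (a b c : EuclideanSpace ℝ (Fin 3))
    (hab : a ≠ b) (hbc : b ≠ c) (hac : a ≠ c) :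
    0 ≤ (-2 * V' ‖c - a‖) * ⟪‖c - a‖⁻¹ • (c - a), ‖b - a‖⁻¹ • (b - a)⟫
      + (-2 * V' ‖a - c‖) * ⟪‖a - c‖⁻¹ • (a - c), ‖b - c‖⁻¹ • (b - c)⟫ := by
  have hca : c - a ≠ 0 := sub_ne_zero.mpr (Ne.symm hac)
  have hba : b - a ≠ 0 := sub_ne_zero.mpr (Ne.symm hab)
  have hbcne : b - c ≠ 0 := sub_ne_zero.mpr hbc
  have hdn : (0:ℝ) < ‖c - a‖ := norm_pos_iff.mpr hca
  have hw : (0:ℝ) ≤ -2 * V' ‖c - a‖ := by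
    have := hV' ‖c - a‖ hdn
    linarith
  have hacnorm : ‖a - c‖ = ‖c - a‖ := norm_sub_rev a c
  have hacneg : a - c = -(c - a) := by abel
  rw [hacnorm, hacneg, smul_neg, inner_neg_left, ← mul_add]
  apply mul_nonneg hw
  have hrw : ⟪‖c - a‖⁻¹ • (c - a), ‖b - a‖⁻¹ • (b - a)⟫
      + -⟪‖c - a‖⁻¹ • (c - a), ‖b - c‖⁻¹ • (b - c)⟫
      = ‖c - a‖⁻¹ * ⟪(b - a) - (b - c), ‖b - a‖⁻¹ • (b - a) - ‖b - c‖⁻¹ • (b - c)⟫ := by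
    have hcab : (b - a) - (b - c) = c - a := by abel
    rw [hcab, inner_sub_right, real_inner_smul_left, real_inner_smul_left]
    ring
  rw [hrw]
  exact mul_nonneg (by positivity) (key_ineq _ _ hba hbcne)
end

section
/- For any a, b, c, a', b', c' ∈ R^3 such that a ≠ c and the relevant denominators are nonzero, the sum cos α(a, c, b - b' + a') + cos α(c, a, b - b' + c') + cos α(a, c, b - b' + c') + cos α(c, a, b - b' + a') ≥ 0, where cos α(p, q, r) := ((q - p)/|q - p|)·((r - p)/|r - p|). -/
open RealInnerProductSpace

lemma aux_pair (u v : EuclideanSpace ℝ (Fin 3)) (hu : u ≠ 0) (hv : v ≠ 0) (huv : u ≠ v) :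
    0 ≤ ⟪‖u - v‖⁻¹ • (u - v), ‖u‖⁻¹ • u⟫ + ⟪‖v - u‖⁻¹ • (v - u), ‖v‖⁻¹ • v⟫ := by
  have hu0 : 0 < ‖u‖ := norm_pos_iff.mpr hu
  have hv0 : 0 < ‖v‖ := norm_pos_iff.mpr hv
  have hw0 : 0 < ‖u - v‖ := by simpa [sub_eq_zero] using huv
  have cs : ⟪u, v⟫ ≤ ‖u‖ * ‖v‖ := real_inner_le_norm u v
  rw [real_inner_smul_left, real_inner_smul_right, real_inner_smul_left,
    real_inner_smul_right, inner_sub_left, inner_sub_left,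
    real_inner_self_eq_norm_sq, real_inner_self_eq_norm_sq, real_inner_comm v u,
    norm_sub_rev v u]
  have h1 : ‖u‖ - ‖v‖ ≤ ‖u‖⁻¹ * (‖u‖ ^ 2 - ⟪u, v⟫) := by
    rw [← sub_nonneg]
    have : ‖u‖⁻¹ * (‖u‖ ^ 2 - ⟪u, v⟫) - (‖u‖ - ‖v‖)
        = ‖u‖⁻¹ * (‖u‖ * ‖v‖ - ⟪u, v⟫) := by field_simp; ring
    rw [this]
    exact mul_nonneg (by positivity) (by linarith)
  have h2 : ‖v‖ - ‖u‖ ≤ ‖v‖⁻¹ * (‖v‖ ^ 2 - ⟪u, v⟫) := by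
    rw [← sub_nonneg]
    have : ‖v‖⁻¹ * (‖v‖ ^ 2 - ⟪u, v⟫) - (‖v‖ - ‖u‖)
        = ‖v‖⁻¹ * (‖v‖ * ‖u‖ - ⟪u, v⟫) := by field_simp; ring
    rw [this]
    exact mul_nonneg (by positivity) (by linarith)
  have hwinv : (0:ℝ) ≤ ‖u - v‖⁻¹ := by positivity
  rw [real_inner_comm u v, ← mul_add]
  exact mul_nonneg hwinv (by linarith)

lemma pair_cos_nonneg (a c x : EuclideanSpace ℝ (Fin 3))
    (hac : a ≠ c) (hxa : x ≠ a) (hxc : x ≠ c) :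
    0 ≤ ⟪‖c - a‖⁻¹ • (c - a), ‖x - a‖⁻¹ • (x - a)⟫
      + ⟪‖a - c‖⁻¹ • (a - c), ‖x - c‖⁻¹ • (x - c)⟫ := by
  have e1 : c - a = (x - a) - (x - c) := by abel
  have e2 : a - c = (x - c) - (x - a) := by abel
  rw [e1, e2]
  exact aux_pair (x - a) (x - c) (sub_ne_zero.mpr hxa) (sub_ne_zero.mpr hxc)
    (fun h => hac (by have := sub_right_injective h; exact this.symm ▸ rfl))

/-- Pairing inequality underlying positivity of the pressure term: with
`cos α(p,q,r) = ((q-p)/|q-p|)·((r-p)/|r-p|)` the cosine of the angle at vertex `p` of the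
triangle `p q r`, for `a ≠ c` and all relevant vertices distinct,
`cos α(a,c,b-b'+a') + cos α(c,a,b-b'+c') + cos α(a,c,b-b'+c') + cos α(c,a,b-b'+a') ≥ 0`. -/
theorem pressure_pairing_nonneg (a b c a' b' c' : EuclideanSpace ℝ (Fin 3))
    (hac : a ≠ c)
    (h1a : b - b' + a' ≠ a) (h1c : b - b' + a' ≠ c)
    (h2a : b - b' + c' ≠ a) (h2c : b - b' + c' ≠ c) :
    let cosα : EuclideanSpace ℝ (Fin 3) → EuclideanSpace ℝ (Fin 3) →
        EuclideanSpace ℝ (Fin 3) → ℝ :=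
      fun p q r => ⟪‖q - p‖⁻¹ • (q - p), ‖r - p‖⁻¹ • (r - p)⟫
    0 ≤ cosα a c (b - b' + a') + cosα c a (b - b' + c')
      + cosα a c (b - b' + c') + cosα c a (b - b' + a') := by
  intro cosα
  have H1 := pair_cos_nonneg a c (b - b' + a') hac h1a h1c
  have H2 := pair_cos_nonneg a c (b - b' + c') hac h2a h2c
  simp only [cosα]
  linarith
end
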